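/- arXiv:2305.08697 — 2 statements merged into one kernel-verified Lean document; each statement's English description precedes it below -/
import Mathlib

section
/- The nonnegative rationals (ℚ≥0, gcd, *, 0, 1), where addition is the rational gcd and multiplication is ordinary multiplication, form a commutative idempotent semiring. -/
/-- The gcd of two nonnegative rationals, written over the common
denominator `x.den * y.den`. -/
noncomputable def nnratGcd (x y : ℚ≥0) : ℚ≥0 :=
  (Nat.gcd (x.num * y.den) (y.num * x.den) : ℚ≥0) / ((x.den : ℚ≥0) * (y.den : ℚ≥0))

lemma gcd_div_eq (a b d a' b' d' : ℕ) (hd : d ≠ 0) (hd' : d' ≠ 0)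
    (ha : a * d' = a' * d) (hb : b * d' = b' * d) :
    (Nat.gcd a b : ℚ≥0) / d = (Nat.gcd a' b' : ℚ≥0) / d' := by
  have key : Nat.gcd a b * d' = Nat.gcd a' b' * d := by
    rw [← Nat.gcd_mul_right, ha, hb, Nat.gcd_mul_right]
  rw [div_eq_div_iff (by exact_mod_cast hd) (by exact_mod_cast hd')]
  exact_mod_cast key

lemma num_mul_eq (x : ℚ≥0) (a d : ℕ) (hd : d ≠ 0) (hx : x = (a : ℚ≥0) / d) :
    x.num * d = a * x.den := by
  have hd' : (d : ℚ≥0) ≠ 0 := by exact_mod_cast hd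
  have h1 : (x.num : ℚ≥0) = x * x.den := by
    have h0 := NNRat.num_div_den x
    rw [div_eq_iff (by exact_mod_cast x.den_ne_zero)] at h0
    exact h0
  have : (x.num : ℚ≥0) * d = a * x.den := by
    rw [h1, hx]; field_simp
  exact_mod_cast this

lemma nnratGcd_rep (a b d : ℕ) (hd : d ≠ 0) :
    nnratGcd ((a : ℚ≥0) / d) ((b : ℚ≥0) / d) = (Nat.gcd a b : ℚ≥0) / d := by
  set x : ℚ≥0 := (a : ℚ≥0) / d with hx
  set y : ℚ≥0 := (b : ℚ≥0) / d with hy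
  have hxn := num_mul_eq x a d hd hx
  have hyn := num_mul_eq y b d hd hy
  have hDx : x.den ≠ 0 := x.den_ne_zero
  have hDy : y.den ≠ 0 := y.den_ne_zero
  have hD : x.den * y.den ≠ 0 := Nat.mul_ne_zero hDx hDy
  have := gcd_div_eq (x.num * y.den) (y.num * x.den) (x.den * y.den) a b d hD hd
    (by rw [Nat.mul_right_comm, hxn]; ring) (by rw [Nat.mul_right_comm, hyn]; ring)
  simpa [nnratGcd, Nat.cast_mul] using this

lemma rep_of (x : ℚ≥0) (k : ℕ) (hk : k ≠ 0) :
    x = ((x.num * k : ℕ) : ℚ≥0) / ((x.den * k : ℕ) : ℚ≥0) := by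
  have hk' : (k : ℚ≥0) ≠ 0 := by exact_mod_cast hk
  push_cast
  rw [mul_div_mul_right _ _ hk', NNRat.num_div_den]

lemma common3 (x y z : ℚ≥0) : ∃ a b c d : ℕ, d ≠ 0 ∧
    x = (a : ℚ≥0) / d ∧ y = (b : ℚ≥0) / d ∧ z = (c : ℚ≥0) / d := by
  refine ⟨x.num * (y.den * z.den), y.num * (x.den * z.den), z.num * (x.den * y.den),
    x.den * (y.den * z.den), Nat.mul_ne_zero x.den_ne_zero
      (Nat.mul_ne_zero y.den_ne_zero z.den_ne_zero), ?_, ?_, ?_⟩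
  · exact rep_of x _ (Nat.mul_ne_zero y.den_ne_zero z.den_ne_zero)
  · have e : y.den * (x.den * z.den) = x.den * (y.den * z.den) := by ring
    have h := rep_of y (x.den * z.den) (Nat.mul_ne_zero x.den_ne_zero z.den_ne_zero)
    rw [e] at h; exact h
  · have e : z.den * (x.den * y.den) = x.den * (y.den * z.den) := by ring
    have h := rep_of z (x.den * y.den) (Nat.mul_ne_zero x.den_ne_zero y.den_ne_zero)
    rw [e] at h; exact h

/-- `(ℚ≥0, gcd, *, 0, 1)` is a commutative idempotent semiring. -/
theorem nnrat_gcd_idempotent_semiring :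
    -- (ℚ≥0, gcd) is a commutative idempotent monoid with identity 0
    (∀ x y z : ℚ≥0, nnratGcd (nnratGcd x y) z = nnratGcd x (nnratGcd y z)) ∧
    (∀ x y : ℚ≥0, nnratGcd x y = nnratGcd y x) ∧
    (∀ x : ℚ≥0, nnratGcd x 0 = x) ∧
    (∀ x : ℚ≥0, nnratGcd x x = x) ∧
    -- (ℚ≥0, *) is a commutative monoid with identity 1
    (∀ x y z : ℚ≥0, (x * y) * z = x * (y * z)) ∧
    (∀ x y : ℚ≥0, x * y = y * x) ∧
    (∀ x : ℚ≥0, 1 * x = x) ∧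
    (∀ x : ℚ≥0, x * 1 = x) ∧
    -- multiplication distributes over gcd
    (∀ x y z : ℚ≥0, x * nnratGcd y z = nnratGcd (x * y) (x * z)) ∧
    (∀ x y z : ℚ≥0, nnratGcd x y * z = nnratGcd (x * z) (y * z)) ∧
    -- 0 annihilates
    (∀ x : ℚ≥0, 0 * x = 0) ∧
    (∀ x : ℚ≥0, x * 0 = 0) := by
  have comm : ∀ x y : ℚ≥0, nnratGcd x y = nnratGcd y x := by
    intro x y
    simp [nnratGcd, Nat.gcd_comm, mul_comm]
  have idem : ∀ x : ℚ≥0, nnratGcd x x = x := by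
    intro x
    have := nnratGcd_rep x.num x.num x.den x.den_ne_zero
    rw [NNRat.num_div_den] at this
    rw [this, Nat.gcd_self, NNRat.num_div_den]
  have zero' : ∀ x : ℚ≥0, nnratGcd x 0 = x := by
    intro x
    simp [nnratGcd, NNRat.num_div_den]
  have distl : ∀ x y z : ℚ≥0, x * nnratGcd y z = nnratGcd (x * y) (x * z) := by
    intro x y z
    obtain ⟨a, b, c, d, hd, hx, hy, hz⟩ := common3 x y z
    have hdd : d * d ≠ 0 := Nat.mul_ne_zero hd hd
    have hxy : x * y = ((a * b : ℕ) : ℚ≥0) / ((d * d : ℕ) : ℚ≥0) := by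
      rw [hx, hy]; push_cast; rw [div_mul_div_comm]
    have hxz : x * z = ((a * c : ℕ) : ℚ≥0) / ((d * d : ℕ) : ℚ≥0) := by
      rw [hx, hz]; push_cast; rw [div_mul_div_comm]
    rw [hxy, hxz, nnratGcd_rep _ _ _ hdd, hy, hz, nnratGcd_rep _ _ _ hd,
      Nat.gcd_mul_left, hx]
    push_cast
    rw [div_mul_div_comm]
  have assoc : ∀ x y z : ℚ≥0, nnratGcd (nnratGcd x y) z = nnratGcd x (nnratGcd y z) := by
    intro x y z
    obtain ⟨a, b, c, d, hd, hx, hy, hz⟩ := common3 x y z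
    rw [hx, hy, hz, nnratGcd_rep _ _ _ hd, nnratGcd_rep _ _ _ hd,
      nnratGcd_rep _ _ _ hd, nnratGcd_rep _ _ _ hd, Nat.gcd_assoc]
  refine ⟨assoc, comm, zero', idem, fun x y z => mul_assoc x y z, fun x y => mul_comm x y,
    one_mul, mul_one, distl, ?_, zero_mul, mul_zero⟩
  intro x y z
  rw [mul_comm, distl, mul_comm z x, mul_comm z y]
end

section
/- Let φ : ℤ^(ω) → 𝕋 be a semiring homomorphism from the idempotent semiring of finitely-supported integer vectors indexed by primes (plus ∞), with pointwise min as addition and pointwise sum as multiplication, to the tropical semiring 𝕋 = (ℝ ∪ {∞}, min, +). If φ is nondegenerate (φ⁻¹(∞) = {∞}) and nontrivial (φ(v) ≠ 0 for some v ≠ ∞), then there exists exactly one prime p with φ(1_p) ≠ 0, where 1_p is the indicator vector of p; and φ(1_p) > 0, so φ equals the projection onto coordinate p scaled by the positive constant φ(1_p). -/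
/-- `ℤ^(ω)`: finitely supported integer vectors indexed by primes, plus `∞`
(represented by `none`). -/
def ZOmega : Type := Option (Nat.Primes →₀ ℤ)

/-- Addition on `ℤ^(ω) ∪ {∞}`: pointwise min, with `∞` as identity. -/
noncomputable def ZOmega.add : ZOmega → ZOmega → ZOmega
  | none, x => x
  | x, none => x
  | some x, some y => some (Finsupp.zipWith min (min_self 0) x y)

/-- Multiplication on `ℤ^(ω) ∪ {∞}`: pointwise sum, with `∞` absorbing. -/
noncomputable def ZOmega.mul : ZOmega → ZOmega → ZOmega
  | none, _ => none
  | _, none => none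
  | some x, some y => some (x + y)

lemma zip_single_zero (q : Nat.Primes) :
    Finsupp.zipWith min (min_self 0) (Finsupp.single q (1:ℤ)) 0 = 0 := by
  ext a
  simp [Finsupp.zipWith_apply, Finsupp.single_apply]
  split <;> simp

lemma zip_single_single {p q : Nat.Primes} (h : p ≠ q) :
    Finsupp.zipWith min (min_self 0) (Finsupp.single p (1:ℤ)) (Finsupp.single q 1) = 0 := by
  ext a
  simp only [Finsupp.zipWith_apply, Finsupp.single_apply, Finsupp.coe_zero, Pi.zero_apply]
  split_ifs with h1 h2 <;> simp_all

/-- A nondegenerate, nontrivial semiring homomorphism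
`φ : ℤ^(ω) ∪ {∞} → 𝕋 = (ℝ ∪ {∞}, min, +)` is, up to a positive scalar, the
projection onto a unique prime coordinate. -/
theorem zomega_hom_is_scaled_projection (φ : ZOmega → WithTop ℝ)
    (hadd : ∀ a b : ZOmega, φ (ZOmega.add a b) = min (φ a) (φ b))
    (hmul : ∀ a b : ZOmega, φ (ZOmega.mul a b) = φ a + φ b)
    (hzero : φ none = ⊤)
    (hone : φ (some 0) = 0)
    (hnondeg : ∀ a : ZOmega, φ a = ⊤ → a = none)
    (hnontriv : ∃ v : ZOmega, v ≠ none ∧ φ v ≠ 0) :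
    ∃ p : Nat.Primes, ∃ c : ℝ, 0 < c ∧
      φ (some (Finsupp.single p 1)) = (c : WithTop ℝ) ∧
      (∀ q : Nat.Primes, q ≠ p → φ (some (Finsupp.single q 1)) = 0) ∧
      (∀ v : Nat.Primes →₀ ℤ, φ (some v) = (((v p : ℝ) * c : ℝ) : WithTop ℝ)) := by
  have hne : ∀ v : Nat.Primes →₀ ℤ, φ (some v) ≠ ⊤ := by
    intro v h
    exact Option.some_ne_none v (hnondeg (some v) h)
  obtain ⟨g, hg⟩ : ∃ g : (Nat.Primes →₀ ℤ) → ℝ, ∀ v, φ (some v) = (g v : WithTop ℝ) := by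
    choose g hg using fun v => WithTop.ne_top_iff_exists.mp (hne v)
    exact ⟨g, fun v => (hg v).symm⟩
  have hgadd : ∀ v w : Nat.Primes →₀ ℤ, g (v + w) = g v + g w := by
    intro v w
    have h : φ (some (v + w)) = φ (some v) + φ (some w) := hmul (some v) (some w)
    rw [hg, hg, hg, ← WithTop.coe_add] at h
    exact_mod_cast h
  set G : (Nat.Primes →₀ ℤ) →+ ℝ := AddMonoidHom.mk' g hgadd with hG
  have hGsingle : ∀ (q : Nat.Primes) (n : ℤ),
      g (Finsupp.single q n) = n * g (Finsupp.single q 1) := by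
    intro q n
    have h1 : Finsupp.single q n = n • Finsupp.single q (1:ℤ) := by
      rw [Finsupp.smul_single]; simp
    have := map_zsmul G n (Finsupp.single q (1:ℤ))
    rw [← h1] at this
    simp [zsmul_eq_mul] at this; exact this
  have hsum : ∀ v : Nat.Primes →₀ ℤ,
      g v = v.sum (fun q n => (n : ℝ) * g (Finsupp.single q 1)) := by
    intro v
    conv_lhs => rw [← Finsupp.sum_single v]
    rw [show g (v.sum Finsupp.single) = G (v.sum Finsupp.single) from rfl,
      map_finsuppSum]
    exact Finsupp.sum_congr (fun q _ => hGsingle q (v q))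
  have hnonneg : ∀ q : Nat.Primes, 0 ≤ g (Finsupp.single q 1) := by
    intro q
    have h : φ (some (0 : Nat.Primes →₀ ℤ)) =
        min (φ (some (Finsupp.single q 1))) (φ (some 0)) := by
      have := hadd (some (Finsupp.single q 1)) (some 0)
      rwa [show ZOmega.add (some (Finsupp.single q 1)) (some 0)
          = some (Finsupp.zipWith min (min_self 0) (Finsupp.single q 1) 0) from rfl,
        zip_single_zero] at this
    rw [hone, hg] at h
    have h0 : (0 : WithTop ℝ) ≤ (g (Finsupp.single q 1) : WithTop ℝ) :=
      min_eq_right_iff.mp h.symm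
    exact_mod_cast h0
  have hdisj : ∀ p q : Nat.Primes, p ≠ q →
      g (Finsupp.single p 1) = 0 ∨ g (Finsupp.single q 1) = 0 := by
    intro p q hpq
    have h : φ (some (0 : Nat.Primes →₀ ℤ)) =
        min (φ (some (Finsupp.single p 1))) (φ (some (Finsupp.single q 1))) := by
      have := hadd (some (Finsupp.single p 1)) (some (Finsupp.single q 1))
      rwa [show ZOmega.add (some (Finsupp.single p 1)) (some (Finsupp.single q 1))
          = some (Finsupp.zipWith min (min_self 0) (Finsupp.single p 1)
            (Finsupp.single q 1)) from rfl,
        zip_single_single hpq] at this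
    rw [hone, hg, hg, ← WithTop.coe_min] at h
    have h' : (0 : ℝ) = min (g (Finsupp.single p 1)) (g (Finsupp.single q 1)) := by
      exact_mod_cast h
    rcases min_cases (g (Finsupp.single p 1)) (g (Finsupp.single q 1)) with ⟨he, _⟩ | ⟨he, _⟩
    · left; rw [← he, ← h']
    · right; rw [← he, ← h']
  -- existence of a prime with nonzero value
  obtain ⟨v, hv, hvne⟩ := hnontriv
  obtain ⟨w, rfl⟩ : ∃ w, v = some w := by
    cases v with
    | none => exact absurd rfl hv
    | some w => exact ⟨w, rfl⟩
  have hwne : g w ≠ 0 := by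
    intro h
    apply hvne
    rw [hg, h]; rfl
  have hex : ∃ p : Nat.Primes, g (Finsupp.single p 1) ≠ 0 := by
    by_contra h
    push_neg at h
    apply hwne
    rw [hsum w]
    rw [Finsupp.sum]
    exact Finset.sum_eq_zero (fun q _ => by rw [h q, mul_zero])
  obtain ⟨p, hp⟩ := hex
  refine ⟨p, g (Finsupp.single p 1), lt_of_le_of_ne (hnonneg p) (Ne.symm hp),
    hg _, ?_, ?_⟩
  · intro q hq
    rcases hdisj q p hq with h | h
    · rw [hg, h]; rfl
    · exact absurd h hp
  · intro v
    rw [hg, hsum v]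
    congr 1
    rw [Finsupp.sum_eq_single p]
    · intro q hq hqp
      rcases hdisj q p hqp with h | h
      · rw [h, mul_zero]
      · exact absurd h hp
    · intro _; rw [Int.cast_zero, zero_mul]
end
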